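/- For every T > 0, E[V_T²] = b² E[U_T²] + e^{−bT} g(T) − b e^{−bT} ∫₀^T e^{bs} g(s) ds + b ∫₀^T e^{−bs} g(s) ds. -/

import Mathlib

/-!
Write `V_T = B_T - b U_T` and expand the square: the only term needing work is
`E[B_T U_T] = e^{-bT} ∫₀ᵀ e^{bt} E[B_t B_T] dt` (Fubini), and the covariance formula together
with the substitution `t ↦ T - t` turns it into the deterministic integrals of the statement.

The hypotheses fix only the values of the integrals `E[B_s B_t]`, so square integrability has to
be recovered from `E[B_t²] = g t ≠ 0`. That `g` has no zero on `(0, ∞)` comes from its largest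
zero `v`: by Fatou along `s ↓ v`, `B_v = 0` a.s., hence `g (2v) = 2 E[B_{2v} B_v] = 0`.
-/

open MeasureTheory Filter

open Set Real Topology

section

variable {α : Type*} [MeasurableSpace α] {μ : Measure α}

theorem sq_integral_le_measureReal_mul_integral_sq [IsFiniteMeasure μ] {f : α → ℝ}
    (hf : MemLp f 2 μ) : (∫ x, f x ∂μ) ^ 2 ≤ μ.real univ * ∫ x, f x ^ 2 ∂μ := by
  rcases eq_zero_or_neZero μ with rfl | hμ
  · simp
  have hμ_pos : 0 < μ.real univ := measureReal_univ_pos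
  have hJensen := (even_two.convexOn_pow (𝕜 := ℝ)).map_average_le
    (continuous_pow 2).continuousOn isClosed_univ (ae_of_all _ fun _ => mem_univ _)
    (hf.integrable one_le_two) hf.integrable_sq
  simp only [average_eq, smul_eq_mul] at hJensen
  rw [mul_pow, inv_pow, sq, mul_inv, mul_assoc, mul_le_mul_iff_right₀ (inv_pos.2 hμ_pos),
    inv_mul_le_iff₀ hμ_pos] at hJensen
  exact hJensen

theorem ae_eq_zero_of_tendsto_integral_sq {X : ℕ → α → ℝ} {Y : α → ℝ}
    (hX : ∀ n, Integrable (fun x => X n x ^ 2) μ)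
    (hXY : ∀ᵐ x ∂μ, Tendsto (fun n => X n x) atTop (𝓝 (Y x)))
    (h_sq : Tendsto (fun n => ∫ x, X n x ^ 2 ∂μ) atTop (𝓝 0)) :
    Y =ᵐ[μ] 0 := by
  have hY_sq : AEMeasurable (fun x => ENNReal.ofReal (Y x ^ 2)) μ :=
    (aemeasurable_of_tendsto_metrizable_ae' (fun n => (hX n).aemeasurable) (hXY.mono
      fun x hx => (hx.pow 2))).ennreal_ofReal
  have hFatou : ∫⁻ x, ENNReal.ofReal (Y x ^ 2) ∂μ ≤ 0 := calc
    ∫⁻ x, ENNReal.ofReal (Y x ^ 2) ∂μ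
        = ∫⁻ x, liminf (fun n => ENNReal.ofReal (X n x ^ 2)) atTop ∂μ := by
      refine lintegral_congr_ae (hXY.mono fun x hx => ?_)
      exact (ENNReal.tendsto_ofReal (hx.pow 2)).liminf_eq.symm
    _ ≤ liminf (fun n => ∫⁻ x, ENNReal.ofReal (X n x ^ 2) ∂μ) atTop :=
      lintegral_liminf_le' fun n => (hX n).aemeasurable.ennreal_ofReal
    _ = 0 := by
      simp_rw [← ofReal_integral_eq_lintegral_ofReal (hX _) (ae_of_all _ fun _ => sq_nonneg _)]
      simpa using (ENNReal.tendsto_ofReal h_sq).liminf_eq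
  filter_upwards [(lintegral_eq_zero_iff' hY_sq).1 (nonpos_iff_eq_zero.1 hFatou)] with x hx
  simpa using hx

theorem integral_sub_const_mul_sq {X Y : α → ℝ} (hX : MemLp X 2 μ) (hY : MemLp Y 2 μ)
    (c : ℝ) :
    ∫ x, (X x - c * Y x) ^ 2 ∂μ =
      ∫ x, X x ^ 2 ∂μ + c ^ 2 * ∫ x, Y x ^ 2 ∂μ - 2 * c * ∫ x, X x * Y x ∂μ := by
  have hXY : Integrable (fun x => X x * Y x) μ := hX.integrable_mul hY
  have hexpand : (fun x => (X x - c * Y x) ^ 2) =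
      fun x => X x ^ 2 + c ^ 2 * Y x ^ 2 - 2 * c * (X x * Y x) := by
    ext x; ring
  have hX2 : Integrable (fun x => X x ^ 2) μ := hX.integrable_sq
  have hY2 : Integrable (fun x => c ^ 2 * Y x ^ 2) μ := hY.integrable_sq.const_mul _
  have hsum : Integrable (fun x => X x ^ 2 + c ^ 2 * Y x ^ 2) μ := hX2.add hY2
  rw [hexpand, integral_sub hsum (hXY.const_mul _), integral_add hX2 hY2,
    integral_const_mul, integral_const_mul]

end

section

variable {ι Ω : Type*} [MeasurableSpace ι] [MeasurableSpace Ω] {ν : Measure ι}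
  {P : Measure Ω} [IsFiniteMeasure ν] [SFinite P] {X : ι → Ω → ℝ}

theorem memLp_two_uncurry_of_integral_sq_le (hX : Measurable (Function.uncurry X)) {C : ℝ}
    (hX_sq : ∀ᵐ t ∂ν, Integrable (fun ω => X t ω ^ 2) P ∧ ∫ ω, X t ω ^ 2 ∂P ≤ C) :
    MemLp (Function.uncurry X) 2 (ν.prod P) := by
  refine (memLp_two_iff_integrable_sq hX.aestronglyMeasurable).2 <|
    (integrable_prod_iff (hX.pow_const 2).aestronglyMeasurable).2 ⟨?_, ?_⟩
  · exact hX_sq.mono fun t ht => ht.1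
  · refine (integrable_const C).mono'
      (hX.pow_const 2).aestronglyMeasurable.norm.integral_prod_right' (hX_sq.mono fun t ht => ?_)
    simp only [Function.uncurry_apply_pair, norm_pow, Real.norm_eq_abs, sq_abs]
    rw [abs_of_nonneg (integral_nonneg fun _ => sq_nonneg _)]
    exact ht.2

theorem memLp_two_integral (hX_meas : Measurable (Function.uncurry X))
    (hX : MemLp (Function.uncurry X) 2 (ν.prod P)) :
    MemLp (fun ω => ∫ t, X t ω ∂ν) 2 P := by
  have hX_sq : Integrable (fun p : ι × Ω => X p.1 p.2 ^ 2) (ν.prod P) := hX.integrable_sq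
  have h_meas : AEStronglyMeasurable (fun ω => ∫ t, X t ω ∂ν) P :=
    (hX_meas.stronglyMeasurable.integral_prod_left' (μ := ν)).aestronglyMeasurable
  refine (memLp_two_iff_integrable_sq h_meas).2 <|
    ((hX_sq.integral_prod_right).const_mul (ν.real univ)).mono' (h_meas.pow 2) ?_
  filter_upwards [hX_sq.prod_left_ae] with ω hω
  rw [Real.norm_eq_abs, abs_of_nonneg (sq_nonneg _)]
  exact sq_integral_le_measureReal_mul_integral_sq <| (memLp_two_iff_integrable_sq
    (hX_meas.comp measurable_prodMk_right).aestronglyMeasurable).2 hω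

theorem integral_mul_integral_eq_integral_integral
    (hX : MemLp (Function.uncurry X) 2 (ν.prod P)) {Y : Ω → ℝ} (hY : MemLp Y 2 P) :
    ∫ ω, (∫ t, X t ω ∂ν) * Y ω ∂P = ∫ t, ∫ ω, X t ω * Y ω ∂P ∂ν := by
  have hXY : Integrable (Function.uncurry fun t ω => X t ω * Y ω) (ν.prod P) :=
    hX.integrable_mul (hY.comp_snd ν)
  simp_rw [← integral_mul_const]
  exact (integral_integral_swap hXY).symm

end

/-- The covariance of a process with `B 0 = 0`, stationary increments and `E[B_t²] = g t`. -/
def HasStationaryIncrementCov {Ω : Type*} [MeasurableSpace Ω] (P : Measure Ω)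
    (B : ℝ → Ω → ℝ) (g : ℝ → ℝ) : Prop :=
  ∀ s, 0 ≤ s → ∀ t, 0 ≤ t → ∫ ω, B s ω * B t ω ∂P = (g t + g s - g |t - s|) / 2

namespace HasStationaryIncrementCov

variable {Ω : Type*} [MeasurableSpace Ω] {P : Measure Ω} {B : ℝ → Ω → ℝ} {g : ℝ → ℝ}
  {t : ℝ}

theorem integral_sq (hB : HasStationaryIncrementCov P B g) (hg0 : g 0 = 0)
    (ht : 0 ≤ t) : ∫ ω, B t ω ^ 2 ∂P = g t := by
  simpa [hg0, sq] using hB t ht t ht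

/-- The covariance identity alone does not give integrability, since a non-integrable
`B t ^ 2` has junk integral `0`; a nonzero value of `g t` does. -/
theorem integrable_sq (hB : HasStationaryIncrementCov P B g) (hg0 : g 0 = 0)
    (ht : 0 ≤ t) (hgt : g t ≠ 0) : Integrable (fun ω => B t ω ^ 2) P := by
  by_contra h
  exact hgt (by rw [← hB.integral_sq hg0 ht, integral_undef h])

theorem ae_eq_zero_of_forall_gt_ne_zero (hB : HasStationaryIncrementCov P B g) (hg0 : g 0 = 0)
    (hg_cont : ContinuousOn g (Ici 0)) (hB_cont : ∀ᵐ ω ∂P, Continuous fun t => B t ω)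
    {v : ℝ} (hv : 0 ≤ v) (hgv : g v = 0) (hg_gt : ∀ s, v < s → g s ≠ 0) :
    B v =ᵐ[P] 0 := by
  let s : ℕ → ℝ := fun n => v + 1 / (n + 1)
  have hvs : ∀ n, v < s n := fun n => lt_add_of_pos_right v Nat.one_div_pos_of_nat
  have hs : Tendsto s atTop (𝓝 v) := by
    simpa [s] using tendsto_one_div_add_atTop_nhds_zero_nat.const_add v
  have hs_nonneg : ∀ n, s n ∈ Ici 0 := fun n => hv.trans (hvs n).le
  refine ae_eq_zero_of_tendsto_integral_sq (fun n => hB.integrable_sq hg0 (hs_nonneg n)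
    (hg_gt _ (hvs n))) (hB_cont.mono fun ω hω => (hω.tendsto v).comp hs) ?_
  have hgs : Tendsto (fun n => g (s n)) atTop (𝓝 0) := hgv ▸ (hg_cont v hv).tendsto.comp
    (tendsto_nhdsWithin_iff.2 ⟨hs, Eventually.of_forall hs_nonneg⟩)
  exact hgs.congr fun n => (hB.integral_sq hg0 (hs_nonneg n)).symm

theorem ne_zero_of_pos (hB : HasStationaryIncrementCov P B g) (hg0 : g 0 = 0)
    (hg_cont : ContinuousOn g (Ici 0)) {a : ℝ} (ha : a ≠ 0) (hg_lim : Tendsto g atTop (𝓝 a))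
    (hB_cont : ∀ᵐ ω ∂P, Continuous fun t => B t ω) {t : ℝ} (ht : 0 < t) : g t ≠ 0 := by
  intro hgt
  set Z := Ici 0 ∩ g ⁻¹' {0}
  have hZ_closed : IsClosed Z :=
    hg_cont.preimage_isClosed_of_isClosed isClosed_Ici isClosed_singleton
  obtain ⟨N, hN⟩ := eventually_atTop.1 (hg_lim.eventually_ne ha)
  have hZ_bdd : BddAbove Z := ⟨N, fun z hz => not_lt.1 fun hNz => hN z hNz.le hz.2⟩
  have hZ_le : ∀ z, 0 ≤ z → g z = 0 → z ≤ sSup Z :=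
    fun z hz hgz => le_csSup hZ_bdd ⟨hz, hgz⟩
  set v := sSup Z
  have hv : v ∈ Z := hZ_closed.csSup_mem ⟨t, ht.le, hgt⟩ hZ_bdd
  have hv_pos : 0 < v := ht.trans_le (hZ_le t ht.le hgt)
  have hBv : B v =ᵐ[P] 0 := hB.ae_eq_zero_of_forall_gt_ne_zero hg0 hg_cont hB_cont hv.1 hv.2
    fun s hvs hgs => (hZ_le s (hv.1.trans hvs.le) hgs).not_gt hvs
  -- `E[B_{2v} B_v] = g(2v) / 2` vanishes, so `2v > v` would be a zero of `g`.
  have hcov := hB (2 * v) (by linarith) v hv.1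
  rw [integral_eq_zero_of_ae (hBv.mono fun ω hω => by simp [hω]),
    show |v - 2 * v| = v by rw [abs_of_nonpos (by linarith)]; ring, hv.2] at hcov
  linarith [hZ_le (2 * v) (by linarith) (by linarith)]

theorem memLp_two (hB : HasStationaryIncrementCov P B g) (hg0 : g 0 = 0)
    (hB_meas : Measurable (B t)) (ht : 0 ≤ t) (hgt : g t ≠ 0) : MemLp (B t) 2 P :=
  (memLp_two_iff_integrable_sq hB_meas.aestronglyMeasurable).2 (hB.integrable_sq hg0 ht hgt)

theorem memLp_two_uncurry_exp_mul [SFinite P] (hB : HasStationaryIncrementCov P B g)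
    (hg0 : g 0 = 0) (hB_meas : Measurable fun p : ℝ × Ω => B p.1 p.2)
    (hg_ne : ∀ t, 0 < t → g t ≠ 0) {C : ℝ} (hC : ∀ t, 0 ≤ t → |g t| ≤ C) (b T : ℝ) :
    MemLp (fun p : ℝ × Ω => exp (b * p.1) * B p.1 p.2)
      2 ((volume.restrict (Ioc 0 T)).prod P) := by
  refine memLp_two_uncurry_of_integral_sq_le (X := fun t ω => exp (b * t) * B t ω)
    ((measurable_fst.const_mul b).exp.mul hB_meas) (C := exp (|b| * T) ^ 2 * C) ?_
  filter_upwards [ae_restrict_mem measurableSet_Ioc] with t ht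
  simp_rw [mul_pow]
  refine ⟨(hB.integrable_sq hg0 ht.1.le (hg_ne t ht.1)).const_mul _, ?_⟩
  rw [integral_const_mul, hB.integral_sq hg0 ht.1.le]
  have hgt_nonneg : 0 ≤ g t :=
    hB.integral_sq hg0 ht.1.le ▸ integral_nonneg fun ω => sq_nonneg _
  have hexp : exp (b * t) ≤ exp (|b| * T) := exp_le_exp.2 <|
    (mul_le_mul_of_nonneg_right (le_abs_self b) ht.1.le).trans
      (mul_le_mul_of_nonneg_left ht.2 (abs_nonneg b))
  exact mul_le_mul (pow_le_pow_left₀ (exp_pos _).le hexp 2)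
    ((le_abs_self _).trans (hC t ht.1.le)) hgt_nonneg (by positivity)

theorem memLp_two_integral_exp_mul [SFinite P] (hB : HasStationaryIncrementCov P B g)
    (hg0 : g 0 = 0) (hB_meas : Measurable fun p : ℝ × Ω => B p.1 p.2)
    (hg_ne : ∀ t, 0 < t → g t ≠ 0) {C : ℝ} (hC : ∀ t, 0 ≤ t → |g t| ≤ C) (b : ℝ) {T : ℝ}
    (hT : 0 ≤ T) :
    MemLp (fun ω => ∫ t in (0 : ℝ)..T, exp (b * t) * B t ω) 2 P := by
  simp_rw [intervalIntegral.integral_of_le hT]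
  exact memLp_two_integral (X := fun t ω => exp (b * t) * B t ω)
    ((measurable_fst.const_mul b).exp.mul hB_meas)
    (hB.memLp_two_uncurry_exp_mul hg0 hB_meas hg_ne hC b T)

theorem integral_integral_exp_mul_mul [SFinite P] (hB : HasStationaryIncrementCov P B g)
    (hg0 : g 0 = 0) (hB_meas : Measurable fun p : ℝ × Ω => B p.1 p.2)
    (hg_ne : ∀ t, 0 < t → g t ≠ 0) {C : ℝ} (hC : ∀ t, 0 ≤ t → |g t| ≤ C) (b : ℝ) {T : ℝ}
    (hT : 0 < T) :
    ∫ ω, (∫ t in (0 : ℝ)..T, exp (b * t) * B t ω) * B T ω ∂P =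
      ∫ t in (0 : ℝ)..T, exp (b * t) * ((g T + g t - g (T - t)) / 2) := by
  have hBT := hB.memLp_two hg0 (hB_meas.comp measurable_prodMk_left) hT.le (hg_ne T hT)
  simp_rw [intervalIntegral.integral_of_le hT.le]
  rw [integral_mul_integral_eq_integral_integral (X := fun t ω => exp (b * t) * B t ω)
    (hB.memLp_two_uncurry_exp_mul hg0 hB_meas hg_ne hC b T) hBT]
  refine setIntegral_congr_fun measurableSet_Ioc fun t ht => ?_
  simp only [mul_assoc, integral_const_mul]
  rw [hB t ht.1.le T hT.le, abs_of_nonneg (sub_nonneg.2 ht.2)]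

end HasStationaryIncrementCov

theorem integral_exp_mul {b : ℝ} (hb : b ≠ 0) (a c : ℝ) :
    ∫ t in a..c, exp (b * t) = (exp (b * c) - exp (b * a)) / b := by
  rw [intervalIntegral.integral_comp_mul_left (fun t => exp t) hb, integral_exp, smul_eq_mul,
    inv_mul_eq_div]

theorem integral_exp_mul_comp_sub_left (b T : ℝ) (f : ℝ → ℝ) :
    ∫ t in (0 : ℝ)..T, exp (b * t) * f (T - t) =
      exp (b * T) * ∫ s in (0 : ℝ)..T, exp (-b * s) * f s := by
  have h := intervalIntegral.integral_comp_sub_left (a := 0) (b := T)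
    (fun s => exp (b * (T - s)) * f s) T
  simp only [sub_sub_cancel, sub_self, sub_zero] at h
  rw [h, ← intervalIntegral.integral_const_mul]
  refine intervalIntegral.integral_congr fun s _ => ?_
  rw [← mul_assoc, ← exp_add]
  ring_nf

theorem integral_exp_mul_stationaryIncrementCov {b T : ℝ} (hb : b ≠ 0) (hT : 0 ≤ T)
    {g : ℝ → ℝ} (hg : ContinuousOn g (Icc 0 T)) :
    ∫ t in (0 : ℝ)..T, exp (b * t) * ((g T + g t - g (T - t)) / 2) =
      (g T * ((exp (b * T) - 1) / b) + (∫ t in (0 : ℝ)..T, exp (b * t) * g t)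
        - exp (b * T) * ∫ t in (0 : ℝ)..T, exp (-b * t) * g t) / 2 := by
  have hexp : Continuous fun t => exp (b * t) := by fun_prop
  have hgT : ContinuousOn (fun t => g (T - t)) (Icc 0 T) :=
    hg.comp (by fun_prop) fun t ht => ⟨sub_nonneg.2 ht.2, sub_le_self T ht.1⟩
  have h1 := (hexp.intervalIntegrable (μ := volume) 0 T).mul_const (g T)
  have h2 : IntervalIntegrable (fun t => exp (b * t) * g t) volume 0 T :=
    (hexp.continuousOn.mul hg).intervalIntegrable_of_Icc hT
  have h3 : IntervalIntegrable (fun t => exp (b * t) * g (T - t)) volume 0 T :=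
    (hexp.continuousOn.mul hgT).intervalIntegrable_of_Icc hT
  have hsplit : (fun t => exp (b * t) * ((g T + g t - g (T - t)) / 2)) =
      fun t => (exp (b * t) * g T + exp (b * t) * g t - exp (b * t) * g (T - t)) / 2 := by
    ext t; ring
  rw [hsplit, intervalIntegral.integral_div, intervalIntegral.integral_sub (h1.add h2) h3,
    intervalIntegral.integral_add h1 h2, intervalIntegral.integral_mul_const,
    integral_exp_mul_comp_sub_left, integral_exp_mul hb, mul_zero, exp_zero]
  ring

theorem var_V_formula_general
    {Ω : Type*} [MeasurableSpace Ω] (P : Measure Ω) [IsProbabilityMeasure P]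
    (b α2 : ℝ) (hb : 0 < b) (hα2 : 0 < α2)
    (g : ℝ → ℝ)
    (hg_cont : ContinuousOn g (Set.Ici 0))
    (hg_bdd : ∃ C, ∀ t, 0 ≤ t → |g t| ≤ C)
    (hg_zero : g 0 = 0)
    (hg_lim : Tendsto g atTop (nhds α2))
    (B : ℝ → Ω → ℝ)
    (hB_meas : Measurable fun p : ℝ × Ω => B p.1 p.2)
    (hB_cont : ∀ᵐ ω ∂P, Continuous fun t => B t ω)
    (hB_cov : ∀ s, 0 ≤ s → ∀ t, 0 ≤ t →
      ∫ ω, B s ω * B t ω ∂P = (g t + g s - g |t - s|) / 2)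
    (U : ℝ → Ω → ℝ)
    (hU : ∀ T ω, U T ω = Real.exp (-b * T) * ∫ t in (0:ℝ)..T, Real.exp (b * t) * B t ω)
    (V : ℝ → Ω → ℝ)
    (hV : ∀ T ω, V T ω = B T ω - b * U T ω)
    :
    ∀ T, 0 < T →
      ∫ ω, (V T ω) ^ 2 ∂P =
        b ^ 2 * (∫ ω, (U T ω) ^ 2 ∂P) + Real.exp (-b * T) * g T
          - b * Real.exp (-b * T) * (∫ s in (0:ℝ)..T, Real.exp (b * s) * g s)
          + b * ∫ s in (0:ℝ)..T, Real.exp (-b * s) * g s := by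
  intro T hT
  have hB : HasStationaryIncrementCov P B g := hB_cov
  obtain ⟨C, hC⟩ := hg_bdd
  have hg_ne : ∀ t, 0 < t → g t ≠ 0 := fun t ht =>
    hB.ne_zero_of_pos hg_zero hg_cont hα2.ne' hg_lim hB_cont ht
  have hBT : MemLp (B T) 2 P :=
    hB.memLp_two hg_zero (hB_meas.comp measurable_prodMk_left) hT.le (hg_ne T hT)
  have hU_eq : U T = fun ω => exp (-b * T) * ∫ t in (0 : ℝ)..T, exp (b * t) * B t ω :=
    funext (hU T)
  have hU_L2 : MemLp (U T) 2 P :=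
    hU_eq ▸ (hB.memLp_two_integral_exp_mul hg_zero hB_meas hg_ne hC b hT.le).const_mul _
  have hcross : ∫ ω, B T ω * U T ω ∂P =
      exp (-b * T) * ∫ t in (0 : ℝ)..T, exp (b * t) * ((g T + g t - g (T - t)) / 2) := by
    simp_rw [hU_eq, mul_left_comm (B T _), integral_const_mul, mul_comm (B T _)]
    rw [hB.integral_integral_exp_mul_mul hg_zero hB_meas hg_ne hC b hT]
  rw [funext (hV T), integral_sub_const_mul_sq hBT hU_L2, hB.integral_sq hg_zero hT.le, hcross,
    integral_exp_mul_stationaryIncrementCov hb.ne' hT.le (hg_cont.mono Icc_subset_Ici_self)]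
  have hexp : exp (-b * T) * exp (b * T) = 1 := by rw [← exp_add]; simp
  field_simp
  simp only [neg_mul] at hexp ⊢
  linear_combination (b * (∫ t in (0 : ℝ)..T, exp (-(b * t)) * g t) - g T) * hexp

theorem var_V_formula
    {Ω : Type*} [MeasurableSpace Ω] (P : Measure Ω) [IsProbabilityMeasure P]
    (b α2 : ℝ) (hb : 0 < b) (hα2 : 0 < α2)
    (g : ℝ → ℝ)
    (hg_cont : ContinuousOn g (Set.Ici 0))
    (hg_bdd : ∃ C, ∀ t, 0 ≤ t → |g t| ≤ C)
    (hg_nonneg : ∀ t, 0 ≤ t → 0 ≤ g t)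
    (hg_zero : g 0 = 0)
    (hg_lim : Tendsto g atTop (nhds α2))
    (B : ℝ → Ω → ℝ)
    (hB_meas : Measurable fun p : ℝ × Ω => B p.1 p.2)
    (hB_cont : ∀ᵐ ω ∂P, Continuous fun t => B t ω)
    (hB_zero : ∀ ω, B 0 ω = 0)
    (hB_mean : ∀ t, 0 ≤ t → ∫ ω, B t ω ∂P = 0)
    (hB_cov : ∀ s, 0 ≤ s → ∀ t, 0 ≤ t →
      ∫ ω, B s ω * B t ω ∂P = (g t + g s - g |t - s|) / 2)
    (U : ℝ → Ω → ℝ)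
    (hU : ∀ T ω, U T ω = Real.exp (-b * T) * ∫ t in (0:ℝ)..T, Real.exp (b * t) * B t ω)
    (V : ℝ → Ω → ℝ)
    (hV : ∀ T ω, V T ω = B T ω - b * U T ω)
    :
    ∀ T, 0 < T →
      ∫ ω, (V T ω) ^ 2 ∂P =
        b ^ 2 * (∫ ω, (U T ω) ^ 2 ∂P) + Real.exp (-b * T) * g T
          - b * Real.exp (-b * T) * (∫ s in (0:ℝ)..T, Real.exp (b * s) * g s)
          + b * ∫ s in (0:ℝ)..T, Real.exp (-b * s) * g s :=
  var_V_formula_general P b α2 hb hα2 g hg_cont hg_bdd hg_zero hg_lim B hB_meas hB_cont hB_cov U hU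
    V hV
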